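/- arXiv:2506.01057 — 2 statements merged into one kernel-verified Lean document; each statement's English description precedes it below -/
import Mathlib

section
/- Let G be a finite connected reduced bipartite graph with partite sets A and B of sizes m and n respectively, where 1 ≤ m ≤ n. Then G admits a (1 + ⌈m/2⌉)-uniform word-representant; in particular, the representation number of G satisfies R(G) ≤ 1 + ⌈m/2⌉. -/
/-- Two distinct letters `a` and `b` alternate in a word `w` if the restriction of `w`
to `{a, b}` has no two consecutive equal letters. -/
def Alternate {V : Type*} [DecidableEq V] (w : List V) (a b : V) : Prop :=
  (w.filter (fun x => x = a ∨ x = b)).Chain' (· ≠ ·)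

/-- A word `w` is a word-representant of a graph `G`: every vertex occurs in `w`, and two
distinct vertices are adjacent iff they alternate in `w`. -/
def Represents {V : Type*} [DecidableEq V] (G : SimpleGraph V) (w : List V) : Prop :=
  (∀ v : V, v ∈ w) ∧ ∀ a b : V, a ≠ b → (G.Adj a b ↔ Alternate w a b)

/-- A word is `k`-uniform if every letter of the alphabet occurs exactly `k` times in it. -/
def IsUniformWord {V : Type*} [DecidableEq V] (w : List V) (k : ℕ) : Prop :=
  ∀ v : V, w.count v = k

/-- `G` is `k`-representable: it has a `k`-uniform word-representant. -/
def Representable {V : Type*} [DecidableEq V] (G : SimpleGraph V) (k : ℕ) : Prop :=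
  ∃ w : List V, Represents G w ∧ IsUniformWord w k

/-- The representation number of `G`: the least `k` such that `G` is `k`-representable. -/
noncomputable def repNumber {V : Type*} [DecidableEq V] (G : SimpleGraph V) : ℕ :=
  sInf {k | Representable G k}

/-- `A` and `B` form a bipartition of `G`: they partition the vertex set and every
edge joins a vertex of `A` to a vertex of `B`. -/
def IsBipartition {V : Type*} [Fintype V] [DecidableEq V] (G : SimpleGraph V) (A B : Finset V) : Prop :=
  A ∪ B = Finset.univ ∧ Disjoint A B ∧
    ∀ a b : V, G.Adj a b → (a ∈ A ∧ b ∈ B) ∨ (a ∈ B ∧ b ∈ A)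

/-- `G` is reduced if no two distinct vertices have the same neighborhood. -/
def Reduced {V : Type*} (G : SimpleGraph V) : Prop :=
  ∀ u v : V, G.neighborSet u = G.neighborSet v → u = v

/-!
Split `A` into `⌈m/2⌉` pairs `(x, y)` (the last one possibly a single letter). In the word
`x y x y` insert every vertex of `B` into the gap determined by which of `x`, `y` it is adjacent
to; then the vertices of `B` between the two copies of a letter are exactly its neighbours. One such
block per pair, surrounded by the letters of the other pairs written backwards, and all preceded by
`B` listed in decreasing order of the sum of its gap indices, gives a word in which every letter
occurs `1 + ⌈m/2⌉` times, letters of `A` alternate exactly with their neighbours, two letters of `A`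
never alternate, and two letters of `B` do not alternate either: the one coming first in the prefix
would have to lie in a strictly earlier gap in every block, so its sum would be smaller. For `m = 2` one block is too few (its two letters would
alternate), and `c₀ x c₁ y c₂ c₃ y (c₀ c₁ c₂ x c₃)ʳ`, with `cᵢ` the vertices of `B` in gap `i`, is a
`2`-uniform representant.
-/

namespace BipartiteWordRep

open List

section Patterns

variable {α : Type*} {a b : α}

theorem isChain_ne_cons_flatten_replicate (hab : a ≠ b) (n : ℕ) :
    (a :: (replicate n [b, a]).flatten).IsChain (· ≠ ·) := by
  induction n with
  | zero => simp
  | succ n ih => simpa [replicate_succ, isChain_cons_cons, hab, hab.symm] using ih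

theorem isChain_ne_flatten_replicate (hab : a ≠ b) (n : ℕ) :
    (replicate n [a, b]).flatten.IsChain (· ≠ ·) := by
  cases n with
  | zero => simp
  | succ n => simpa [replicate_succ, isChain_cons_cons, hab] using
      isChain_ne_cons_flatten_replicate hab.symm n

theorem cons_flatten_replicate (n : ℕ) :
    b :: (replicate n [a, b]).flatten = (replicate n [b, a]).flatten ++ [b] := by
  induction n with
  | zero => simp
  | succ n ih => simp [replicate_succ, ih]

theorem isChain_ne_edge_pattern (hab : a ≠ b) (j r : ℕ) :
    ([b] ++ (replicate j [a, b]).flatten ++ [a, b, a] ++ (replicate r [b, a]).flatten).IsChain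
      (· ≠ ·) := by
  have e : [b] ++ (replicate j [a, b]).flatten ++ [a, b, a] ++ (replicate r [b, a]).flatten =
      (replicate (j + (r + 2)) [b, a]).flatten := by
    rw [singleton_append, cons_flatten_replicate]
    simp [replicate_add, replicate_succ]
  rw [e]
  exact isChain_ne_flatten_replicate hab.symm _

theorem not_isChain_ne_append_cons_cons (u v : List α) (c : α) :
    ¬ (u ++ c :: c :: v).IsChain (· ≠ ·) := fun h =>
  isChain_pair.1 (h.infix ⟨u, v, by simp⟩ : [c, c].IsChain (· ≠ ·)) rfl

theorem not_isChain_append_reverse {s : List α} (hs : s ≠ []) :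
    ¬ (s ++ s.reverse).IsChain (· ≠ ·) := by
  obtain ⟨s, z, rfl⟩ := (eq_nil_or_concat s).resolve_left hs
  simp

theorem not_isChain_swap {β : Type*} (r : β → Prop) [DecidablePred r] {P : List β}
    (hex : ∃ q ∈ P, r q) :
    ¬ ([b, a] ++ P.flatMap fun q => if r q then [a, b] else [b, a]).IsChain (· ≠ ·) := by
  induction P with
  | nil => simp at hex
  | cons q P ih =>
    by_cases hq : r q
    · simp [hq]
    · have hex : ∃ q ∈ P, r q := by simpa [hq] using hex
      simpa [hq, isChain_cons_cons] using fun _ _ => ih hex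

end Patterns

section Restrict

variable {V : Type*} [DecidableEq V] {a b c x : V} {u w : List V}

def restrict (a b : V) (w : List V) : List V := w.filter fun x => x = a ∨ x = b

theorem alternate_iff_isChain_restrict : Alternate w a b ↔ (restrict a b w).IsChain (· ≠ ·) :=
  Iff.rfl

@[simp] theorem restrict_nil : restrict a b ([] : List V) = [] := rfl

@[simp] theorem restrict_append : restrict a b (u ++ w) = restrict a b u ++ restrict a b w :=
  filter_append ..

@[simp] theorem restrict_cons :
    restrict a b (x :: w) = if x = a ∨ x = b then x :: restrict a b w else restrict a b w := by
  by_cases h : x = a ∨ x = b <;> simp [restrict, h]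

theorem restrict_reverse : restrict a b w.reverse = (restrict a b w).reverse :=
  filter_reverse

theorem restrict_comm : restrict a b w = restrict b a w := by
  simp only [restrict, or_comm]

theorem restrict_filter (p : V → Bool) : restrict a b (w.filter p) = (restrict a b w).filter p := by
  simp only [restrict, filter_filter, Bool.and_comm]

theorem mem_restrict : x ∈ restrict a b w ↔ x ∈ w ∧ (x = a ∨ x = b) := by
  simp [restrict]

theorem restrict_eq_nil (ha : a ∉ w) (hb : b ∉ w) : restrict a b w = [] := by
  rw [eq_nil_iff_forall_not_mem]
  rintro x hx
  obtain ⟨hx, rfl | rfl⟩ := mem_restrict.1 hx <;> contradiction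

theorem restrict_eq_singleton (ha : a ∉ w) (hb : w.count b = 1) : restrict a b w = [b] := by
  rw [← replicate_one, ← hb, ← filter_eq]
  refine filter_congr fun x hx => ?_
  have : x ≠ a := fun h => ha (h ▸ hx)
  simp [this]

theorem restrict_eq_pair (hw : w.Nodup) (hab : a ≠ b) (ha : a ∈ w) (hb : b ∈ w) :
    restrict a b w = [a, b] ∨ restrict a b w = [b, a] := by
  refine perm_pair.1 ((perm_ext_iff_of_nodup (hw.filter _) (by simp [hab])).2 fun x => ?_)
  change x ∈ restrict a b w ↔ _
  simp only [mem_restrict, mem_cons, not_mem_nil, or_false]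
  constructor
  · exact And.right
  · rintro (rfl | rfl) <;> simp_all

theorem not_alternate_of_restrict_eq {v : List V} (h : restrict a b w = u ++ c :: c :: v) :
    ¬ Alternate w a b := by
  rw [alternate_iff_isChain_restrict, h]
  exact not_isChain_ne_append_cons_cons u v c

theorem alternate_comm : Alternate w a b ↔ Alternate w b a := by
  rw [alternate_iff_isChain_restrict, alternate_iff_isChain_restrict, restrict_comm]

theorem not_alternate_of_infix {w' : List V} (h : w' <:+: w) (h' : ¬ Alternate w' a b) :
    ¬ Alternate w a b := fun hw => h' (hw.infix (h.filter _))

end Restrict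

section Pairs

variable {V : Type*} {a : V} {p : V × Option V} {P P₁ P₂ : List (V × Option V)}

def pairLetters (p : V × Option V) : List V := p.1 :: p.2.toList

def lettersOf (P : List (V × Option V)) : List V := P.flatMap pairLetters

@[simp] theorem lettersOf_nil : lettersOf ([] : List (V × Option V)) = [] := rfl

@[simp] theorem lettersOf_cons : lettersOf (p :: P) = pairLetters p ++ lettersOf P :=
  flatMap_cons ..

@[simp] theorem lettersOf_append : lettersOf (P₁ ++ P₂) = lettersOf P₁ ++ lettersOf P₂ :=
  flatMap_append ..

def revLettersOf (P : List (V × Option V)) : List V := P.flatMap fun p => (pairLetters p).reverse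

@[simp] theorem revLettersOf_cons :
    revLettersOf (p :: P) = (pairLetters p).reverse ++ revLettersOf P :=
  flatMap_cons ..

@[simp] theorem revLettersOf_append : revLettersOf (P₁ ++ P₂) = revLettersOf P₁ ++ revLettersOf P₂ :=
  flatMap_append ..

theorem revLettersOf_perm (P : List (V × Option V)) : revLettersOf P ~ lettersOf P :=
  Perm.flatMap_left P fun _ _ => reverse_perm _

def pairUp : List V → List (V × Option V)
  | [] => []
  | [x] => [(x, none)]
  | x :: y :: l => (x, some y) :: pairUp l

theorem lettersOf_pairUp (l : List V) : lettersOf (pairUp l) = l := by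
  induction l using pairUp.induct <;> simp_all [pairUp, pairLetters]

theorem length_pairUp (l : List V) : (pairUp l).length = (l.length + 1) / 2 := by
  induction l using pairUp.induct with
  | case1 | case2 => simp [pairUp]
  | case3 x y l ih =>
    simp only [pairUp, length_cons, ih]
    omega

theorem exists_eq_append_cons_of_mem_lettersOf (ha : a ∈ lettersOf P) :
    ∃ P₁ p P₂, P = P₁ ++ p :: P₂ ∧ a ∈ pairLetters p := by
  obtain ⟨p, hp, hap⟩ := mem_flatMap.1 ha
  obtain ⟨P₁, P₂, rfl⟩ := append_of_mem hp
  exact ⟨P₁, p, P₂, rfl, hap⟩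

theorem pairLetters_subset_lettersOf (hp : p ∈ P) : pairLetters p ⊆ lettersOf P :=
  fun _ h => mem_flatMap.2 ⟨p, hp, h⟩

theorem not_mem_pairLetters_of_not_mem (hp : p ∈ P) (ha : a ∉ lettersOf P) :
    a ∉ pairLetters p :=
  fun h => ha (pairLetters_subset_lettersOf hp h)

theorem not_mem_lettersOf_of_nodup (h : (lettersOf (P₁ ++ p :: P₂)).Nodup)
    (ha : a ∈ pairLetters p) : a ∉ lettersOf P₁ ∧ a ∉ lettersOf P₂ := by
  simp only [lettersOf_append, lettersOf_cons, nodup_append, mem_append] at h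
  exact ⟨fun h₁ => h.2.2 a h₁ a (Or.inl ha) rfl, fun h₂ => h.2.1.2.2 a ha a h₂ rfl⟩

theorem nodup_pairLetters_of_nodup (h : (lettersOf (P₁ ++ p :: P₂)).Nodup) :
    (pairLetters p).Nodup := by
  simp only [lettersOf_append, lettersOf_cons] at h
  exact h.of_append_right.of_append_left

end Pairs

section Construction

variable {V : Type*} (G : SimpleGraph V) [DecidableRel G.Adj] {LB : List V}
  {p : V × Option V} {P : List (V × Option V)}

def adjClass (p : V × Option V) (z : V) : ℕ :=
  match p with
  | (x, some y) =>
      if G.Adj x z then (if G.Adj y z then 2 else 1) else (if G.Adj y z then 3 else 0)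
  | (x, none) => if G.Adj x z then 1 else 0

def classList (LB : List V) (p : V × Option V) (i : ℕ) : List V :=
  LB.filter (adjClass G p · = i)

def classSort (LB : List V) (p : V × Option V) : List V :=
  classList G LB p 0 ++ classList G LB p 1 ++ classList G LB p 2 ++ classList G LB p 3

/-- `c₀ x c₁ y c₂ x c₃ y` for the class lists `cᵢ` of `p = (x, y)`: by the numbering in `adjClass`,
the letters of `LB` between the two copies of `x` (of `y`) are its neighbours. -/
def pairWord (LB : List V) (p : V × Option V) : List V :=
  classList G LB p 0 ++ p.1 :: classList G LB p 1 ++ p.2.toList ++ classList G LB p 2 ++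
    p.1 :: classList G LB p 3 ++ p.2.toList

/-- For `P = [p₁, …, pₖ]` this is the concatenation of the blocks
`rev pᵢ₊₁ ⋯ rev pₖ · pairWord pᵢ · post · rev p₁ ⋯ rev pᵢ₋₁`, where `rev p` lists the letters of
`p` backwards; so a letter of a pair occurs once in every block but its own, where it occurs
twice. -/
def blocksWord (LB : List V) : List (V × Option V) → List V → List V
  | [], _ => []
  | p :: P, post =>
      revLettersOf P ++ pairWord G LB p ++ post ++
        blocksWord LB P (post ++ (pairLetters p).reverse)

/-- The letters of `LB` occur in the order of `classSort` and then in the reverse order. -/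
def twoWord (LB : List V) (x y : V) : List V :=
  classList G LB (x, some y) 0 ++ x :: classList G LB (x, some y) 1 ++
    y :: classList G LB (x, some y) 2 ++ classList G LB (x, some y) 3 ++
    y :: (classList G LB (x, some y) 0 ++ classList G LB (x, some y) 1 ++
      classList G LB (x, some y) 2 ++ x :: classList G LB (x, some y) 3).reverse

def classSum (P : List (V × Option V)) (z : V) : ℕ := (P.map fun p => adjClass G p z).sum

def bipartiteWord (LB : List V) (P : List (V × Option V)) : List V :=
  LB.reverse ++ blocksWord G LB P []

variable {G}

theorem adjClass_lt_four (p : V × Option V) (z : V) : adjClass G p z < 4 := by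
  obtain ⟨x, _ | y⟩ := p <;> simp only [adjClass] <;> split_ifs <;> omega

theorem pairWord_infix_blocksWord (hp : p ∈ P) (post : List V) :
    pairWord G LB p <:+: blocksWord G LB P post := by
  induction P generalizing post with
  | nil => cases hp
  | cons q P ih =>
    rw [blocksWord]
    rcases mem_cons.1 hp with rfl | hp
    · exact (infix_append _ _ _).trans (prefix_append _ _).isInfix
    · exact (ih hp _).trans (suffix_append _ _).isInfix

end Construction

section PairWord

variable {V : Type*} [DecidableEq V] {G : SimpleGraph V} [DecidableRel G.Adj]
  {LB : List V} {p : V × Option V} {a b b' u v : V}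

theorem count_classList (p : V × Option V) (i : ℕ) (z : V) :
    (classList G LB p i).count z = if adjClass G p z = i then LB.count z else 0 := by
  split_ifs with h
  · exact count_filter (by simpa using h)
  · exact count_eq_zero.2 fun hz => h (by simpa using (mem_filter.1 hz).2)

theorem classSort_perm (p : V × Option V) : classSort G LB p ~ LB := by
  refine perm_iff_count.2 fun z => ?_
  have := adjClass_lt_four (G := G) p z
  simp only [classSort, count_append, count_classList]
  interval_cases adjClass G p z <;> simp

theorem pairWord_perm (p : V × Option V) :
    pairWord G LB p ~ LB ++ pairLetters p ++ pairLetters p := by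
  refine perm_iff_count.2 fun z => ?_
  simp only [pairWord, pairLetters, count_append, count_cons]
  rw [← (classSort_perm (G := G) (LB := LB) p).count_eq z]
  simp only [classSort, count_append]
  omega

theorem restrict_pairWord_of_not_mem (hu : u ∉ pairLetters p) (hv : v ∉ pairLetters p) :
    restrict u v (pairWord G LB p) = restrict u v (classSort G LB p) := by
  obtain ⟨x, y⟩ := p
  simp only [pairLetters, mem_cons, not_or] at hu hv
  have hx : ¬(x = u ∨ x = v) := by rintro (rfl | rfl) <;> simp_all
  have hy : restrict u v y.toList = [] := restrict_eq_nil hu.2 hv.2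
  simp [pairWord, classSort, hx, hy]

theorem restrict_pairWord_of_not_mem_LB (hu : u ∉ LB) (hv : v ∉ LB) :
    restrict u v (pairWord G LB p) = restrict u v (pairLetters p ++ pairLetters p) := by
  have hc : ∀ i, restrict u v (classList G LB p i) = [] := fun i =>
    restrict_eq_nil (fun h => hu (mem_of_mem_filter h)) (fun h => hv (mem_of_mem_filter h))
  simp [pairWord, pairLetters, hc]

theorem restrict_classList (hLB : LB.Nodup) (ha : a ∉ LB) (hb : b ∈ LB) (p : V × Option V)
    (i : ℕ) : restrict a b (classList G LB p i) = if adjClass G p b = i then [b] else [] := by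
  rw [classList, restrict_filter, restrict_eq_singleton ha (count_eq_one_of_mem hLB hb)]
  split_ifs with h <;> simp [h]

theorem restrict_classSort (h : restrict b b' LB = [b, b']) (p : V × Option V) :
    restrict b b' (classSort G LB p) =
      if adjClass G p b ≤ adjClass G p b' then [b, b'] else [b', b] := by
  have hb := adjClass_lt_four (G := G) p b
  have hb' := adjClass_lt_four (G := G) p b'
  simp only [classSort, classList, restrict_append, restrict_filter, h, filter_cons, filter_nil]
  generalize adjClass G p b = i at *
  generalize adjClass G p b' = j at *
  interval_cases i <;> interval_cases j <;> simp

theorem restrict_pairWord_of_mem_pairLetters (hLB : LB.Nodup) (hb : b ∈ LB)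
    (hpLB : ∀ z ∈ pairLetters p, z ∉ LB) (hp : (pairLetters p).Nodup) (ha : a ∈ pairLetters p) :
    restrict a b (pairWord G LB p) = [a, b, a] ∧ G.Adj a b ∨
      (restrict a b (pairWord G LB p) = [b, a, a] ∨ restrict a b (pairWord G LB p) = [a, a, b]) ∧
        ¬ G.Adj a b := by
  have hcl := restrict_classList (G := G) hLB (hpLB a ha) hb p
  have hab : a ≠ b := fun h => hpLB a ha (h ▸ hb)
  obtain ⟨x, _ | y⟩ := p
  · obtain rfl : a = x := by simpa [pairLetters] using ha
    by_cases hx : G.Adj a b <;> simp [pairWord, adjClass, hcl, hx, hab]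
  · simp only [pairLetters, Option.toList_some, mem_cons, not_mem_nil, or_false, forall_eq_or_imp,
      forall_eq, nodup_cons, not_false_eq_true, nodup_nil, and_true] at ha hp hpLB
    have hxb : x ≠ b := fun h => hpLB.1 (h ▸ hb)
    have hyb : y ≠ b := fun h => hpLB.2 (h ▸ hb)
    by_cases hx : G.Adj x b <;> by_cases hy : G.Adj y b <;> rcases ha with rfl | rfl <;>
      simp [pairWord, adjClass, hcl, hx, hy, hp, Ne.symm hp, hxb, hyb]

end PairWord

section Blocks

variable {V : Type*} [DecidableEq V] {G : SimpleGraph V} [DecidableRel G.Adj]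
  {LB : List V} {p : V × Option V} {P P₁ P₂ : List (V × Option V)} {u v : V}

theorem count_blocksWord (P : List (V × Option V)) (post : List V) (z : V) :
    (blocksWord G LB P post).count z + (lettersOf P).count z =
      P.length * (post.count z + (lettersOf P).count z) +
        (P.map fun p => (pairWord G LB p).count z).sum := by
  induction P generalizing post with
  | nil => simp [blocksWord]
  | cons p P ih =>
    have := ih (post ++ (pairLetters p).reverse)
    simp only [blocksWord, lettersOf_cons, count_append, count_reverse,
      (revLettersOf_perm P).count_eq, length_cons, map_cons, sum_cons] at this ⊢
    nlinarith

theorem restrict_revLettersOf_eq_nil (hu : u ∉ lettersOf P) (hv : v ∉ lettersOf P) :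
    restrict u v (revLettersOf P) = [] :=
  restrict_eq_nil (fun h => hu ((revLettersOf_perm P).subset h))
    (fun h => hv ((revLettersOf_perm P).subset h))

theorem restrict_blocksWord_of_not_mem (hu : u ∉ lettersOf P) (hv : v ∉ lettersOf P)
    (post : List V) :
    restrict u v (blocksWord G LB P post) =
      P.flatMap fun p => restrict u v (pairWord G LB p) ++ restrict u v post := by
  induction P generalizing post with
  | nil => simp [blocksWord]
  | cons q P ih =>
    simp only [lettersOf_cons, mem_append, not_or] at hu hv
    rw [blocksWord, restrict_append, restrict_append, restrict_append, ih hu.2 hv.2,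
      restrict_revLettersOf_eq_nil hu.2 hv.2, restrict_append,
      restrict_eq_nil (w := (pairLetters q).reverse) (by simpa using hu.1) (by simpa using hv.1)]
    simp

theorem restrict_blocksWord_append_cons {t : List V} (hu₁ : u ∉ lettersOf P₁)
    (hv₁ : v ∉ lettersOf P₁) (hu₂ : u ∉ lettersOf P₂) (hv₂ : v ∉ lettersOf P₂)
    (ht : ∀ q ∈ P₁ ++ P₂, restrict u v (pairWord G LB q) = t) {post : List V}
    (hpost : restrict u v post = []) :
    restrict u v (blocksWord G LB (P₁ ++ p :: P₂) post) =
      (replicate P₁.length (restrict u v (pairLetters p).reverse ++ t)).flatten ++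
        restrict u v (pairWord G LB p) ++
        (replicate P₂.length (t ++ restrict u v (pairLetters p).reverse)).flatten := by
  induction P₁ generalizing post with
  | nil =>
    rw [nil_append, blocksWord, restrict_append, restrict_append, restrict_append,
      restrict_revLettersOf_eq_nil hu₂ hv₂, hpost, restrict_blocksWord_of_not_mem hu₂ hv₂,
      restrict_append, hpost, flatMap_congr (fun q hq => by rw [ht q (by simp [hq])]),
      flatMap_def, map_const']
    simp
  | cons q P₁ ih =>
    simp only [lettersOf_cons, mem_append, not_or] at hu₁ hv₁
    rw [cons_append, blocksWord, restrict_append, restrict_append, restrict_append,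
      ih hu₁.2 hv₁.2 (fun r hr => ht r (by simp_all)) (by
        rw [restrict_append, hpost, restrict_eq_nil (by simpa using hu₁.1) (by simpa using hv₁.1)]
        rfl),
      ht q (by simp), hpost]
    simp [restrict_revLettersOf_eq_nil hu₁.2 hv₁.2, restrict_revLettersOf_eq_nil hu₂ hv₂,
      replicate_succ]

end Blocks

section BipartiteWord

variable {V : Type*} [DecidableEq V] {G : SimpleGraph V} [DecidableRel G.Adj]
  {LB : List V} {P P₁ P₂ : List (V × Option V)} {a b c x y : V}

theorem sum_count_pairWord (P : List (V × Option V)) (z : V) :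
    (P.map fun p => (pairWord G LB p).count z).sum =
      P.length * LB.count z + 2 * (lettersOf P).count z := by
  induction P with
  | nil => simp
  | cons p P ih =>
    simp only [map_cons, sum_cons, ih, (pairWord_perm p).count_eq, count_append, lettersOf_cons,
      length_cons]
    ring

theorem count_bipartiteWord (hLB : LB.Nodup) (hP : (lettersOf P).Nodup)
    (hdisj : ∀ z ∈ lettersOf P, z ∉ LB) {z : V} (hz : z ∈ LB ∨ z ∈ lettersOf P) :
    (bipartiteWord G LB P).count z = P.length + 1 := by
  have h := count_blocksWord (G := G) (LB := LB) P [] z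
  rw [sum_count_pairWord] at h
  simp only [bipartiteWord, count_append, count_reverse, count_nil, zero_add] at h ⊢
  rcases hz with hz | hz
  · rw [count_eq_one_of_mem hLB hz, count_eq_zero.2 fun h => hdisj z h hz] at *
    omega
  · rw [count_eq_one_of_mem hP hz, count_eq_zero.2 (hdisj z hz)] at *
    omega

theorem not_alternate_bipartiteWord_of_mem_LB (hLB : LB.Nodup)
    (hdisj : ∀ z ∈ lettersOf P, z ∉ LB)
    (hsort : LB.Pairwise fun u v => classSum G P u ≤ classSum G P v) (hPne : P ≠ [])
    (hb : b ∈ LB) (hc : c ∈ LB) (hbc : b ≠ c) : ¬ Alternate (bipartiteWord G LB P) b c := by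
  wlog h : restrict b c LB = [b, c] generalizing b c
  · rw [alternate_comm]
    refine this hc hb hbc.symm ?_
    rw [restrict_comm]
    exact (restrict_eq_pair hLB hbc hb hc).resolve_left h
  have hle : classSum G P b ≤ classSum G P c := by
    simpa using hsort.sublist (l₁ := [b, c]) (h ▸ filter_sublist)
  have hex : ∃ q ∈ P, adjClass G q b ≤ adjClass G q c := by
    by_contra! hlt
    obtain ⟨q, hq⟩ := exists_mem_of_ne_nil P hPne
    exact hle.not_gt (sum_lt_sum _ _ (fun q hq => (hlt q hq).le) ⟨q, hq, hlt q hq⟩)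
  have hbP : b ∉ lettersOf P := fun h => hdisj b h hb
  have hcP : c ∉ lettersOf P := fun h => hdisj c h hc
  rw [alternate_iff_isChain_restrict, bipartiteWord, restrict_append, restrict_reverse, h,
    restrict_blocksWord_of_not_mem hbP hcP]
  have hq : ∀ q ∈ P, restrict b c (pairWord G LB q) ++ restrict b c [] =
      if adjClass G q b ≤ adjClass G q c then [b, c] else [c, b] := fun q hq => by
    rw [restrict_pairWord_of_not_mem (fun h => hbP (mem_flatMap.2 ⟨q, hq, h⟩))
      (fun h => hcP (mem_flatMap.2 ⟨q, hq, h⟩)), restrict_classSort h, restrict_nil, append_nil]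
  rw [flatMap_congr hq]
  exact not_isChain_swap _ hex

theorem not_alternate_bipartiteWord_of_not_mem_pairLetters {p : V × Option V} (hp : p ∈ P)
    (hnd : (pairLetters p).Nodup) (ha : a ∈ pairLetters p) (hc : c ∉ pairLetters p)
    (haLB : a ∉ LB) (hcLB : c ∉ LB) : ¬ Alternate (bipartiteWord G LB P) a c := by
  refine not_alternate_of_infix ((pairWord_infix_blocksWord hp []).trans (suffix_append _ _).isInfix)
    (not_alternate_of_restrict_eq (u := []) (c := a) (v := []) ?_)
  rw [restrict_pairWord_of_not_mem_LB haLB hcLB, restrict_append, restrict_comm,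
    restrict_eq_singleton hc (count_eq_one_of_mem hnd ha)]
  rfl

theorem not_alternate_bipartiteWord_pair (hP : (lettersOf P).Nodup)
    (hdisj : ∀ z ∈ lettersOf P, z ∉ LB) (hlen : (lettersOf P).length ≠ 2)
    (hsplit : P = P₁ ++ (x, some y) :: P₂) : ¬ Alternate (bipartiteWord G LB P) x y := by
  subst hsplit
  have hxp : x ∈ pairLetters (x, some y) := by simp [pairLetters]
  have hyp : y ∈ pairLetters (x, some y) := by simp [pairLetters]
  have hx := not_mem_lettersOf_of_nodup hP hxp
  have hy := not_mem_lettersOf_of_nodup hP hyp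
  have hxLB : x ∉ LB := hdisj x (by simp [hxp])
  have hyLB : y ∉ LB := hdisj y (by simp [hyp])
  have hxy : x ≠ y := by simpa [pairLetters] using nodup_pairLetters_of_nodup hP
  have hx' : x ∉ lettersOf (P₁ ++ P₂) := by simp [hx.1, hx.2]
  have hy' : y ∉ lettersOf (P₁ ++ P₂) := by simp [hy.1, hy.2]
  have ht : ∀ q ∈ P₁ ++ P₂, restrict x y (pairWord G LB q) = [] := fun q hq => by
    rw [restrict_pairWord_of_not_mem_LB hxLB hyLB, restrict_append,
      restrict_eq_nil (not_mem_pairLetters_of_not_mem hq hx')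
        (not_mem_pairLetters_of_not_mem hq hy'), append_nil]
  rw [alternate_iff_isChain_restrict, bipartiteWord, restrict_append,
    restrict_eq_nil (w := LB.reverse) (by simpa) (by simpa),
    restrict_blocksWord_append_cons hx.1 hy.1 hx.2 hy.2 ht rfl,
    restrict_pairWord_of_not_mem_LB hxLB hyLB]
  simp only [pairLetters, Option.toList_some, reverse_cons, reverse_nil, nil_append,
    cons_append, append_nil, restrict_cons, restrict_nil, true_or, or_true, if_true]
  -- `x y x y` next to a neighbouring block's `y x` repeats a letter
  rcases P₂ with _ | ⟨q, P₂⟩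
  · obtain ⟨Q, q, rfl⟩ := P₁.eq_nil_or_concat.resolve_left
      (by rintro rfl; simp [lettersOf, pairLetters] at hlen)
    simp [replicate_succ']
  · simp [replicate_succ]

theorem adj_iff_alternate_bipartiteWord (hLB : LB.Nodup) (hP : (lettersOf P).Nodup)
    (hdisj : ∀ z ∈ lettersOf P, z ∉ LB) (ha : a ∈ lettersOf P) (hb : b ∈ LB) :
    G.Adj a b ↔ Alternate (bipartiteWord G LB P) a b := by
  obtain ⟨P₁, p, P₂, rfl, hap⟩ := exists_eq_append_cons_of_mem_lettersOf ha
  have haP := not_mem_lettersOf_of_nodup hP hap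
  have hbP : b ∉ lettersOf (P₁ ++ p :: P₂) := fun h => hdisj b h hb
  have haLB : a ∉ LB := hdisj a ha
  have hnd := nodup_pairLetters_of_nodup hP
  have ht : ∀ q ∈ P₁ ++ P₂, restrict a b (pairWord G LB q) = [b] := fun q hq => by
    have haq : a ∉ pairLetters q := not_mem_pairLetters_of_not_mem hq (by simp [haP.1, haP.2])
    have hbq : b ∉ pairLetters q :=
      not_mem_pairLetters_of_not_mem (((sublist_cons_self p P₂).append_left P₁).subset hq) hbP
    refine restrict_eq_singleton (fun h => ?_) ?_
    · simpa [haLB, haq] using (pairWord_perm q).subset h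
    · rw [(pairWord_perm q).count_eq]
      simp [count_eq_one_of_mem hLB hb, count_eq_zero.2 hbq]
  have hs : restrict a b (pairLetters p).reverse = [a] := by
    rw [restrict_reverse, restrict_comm, restrict_eq_singleton (fun h => hbP ?_)
      (count_eq_one_of_mem hnd hap)]
    · rfl
    · exact pairLetters_subset_lettersOf (by simp) h
  rw [alternate_iff_isChain_restrict, bipartiteWord, restrict_append, restrict_reverse,
    restrict_eq_singleton haLB (count_eq_one_of_mem hLB hb), restrict_blocksWord_append_cons
      haP.1 (fun h => hbP (by simp [h])) haP.2 (fun h => hbP (by simp [h])) ht rfl, hs]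
  rcases restrict_pairWord_of_mem_pairLetters (G := G) hLB hb
    (fun z hz => hdisj z (pairLetters_subset_lettersOf (by simp) hz)) hnd hap with
    ⟨hc, hadj⟩ | ⟨hc | hc, hadj⟩ <;> rw [hc]
  · simpa [hadj] using isChain_ne_edge_pattern (G.ne_of_adj hadj) P₁.length P₂.length
  · simp [hadj]
  · simp [hadj]

theorem not_alternate_bipartiteWord_of_mem_lettersOf (hP : (lettersOf P).Nodup)
    (hdisj : ∀ z ∈ lettersOf P, z ∉ LB) (hlen : (lettersOf P).length ≠ 2)
    (ha : a ∈ lettersOf P) (hc : c ∈ lettersOf P) (hac : a ≠ c) :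
    ¬ Alternate (bipartiteWord G LB P) a c := by
  obtain ⟨P₁, p, P₂, rfl, hap⟩ := exists_eq_append_cons_of_mem_lettersOf ha
  by_cases hcp : c ∈ pairLetters p
  · obtain ⟨x, _ | y⟩ := p
    · simp only [pairLetters, Option.toList_none, mem_singleton] at hap hcp
      exact absurd (hap.trans hcp.symm) hac
    · simp only [pairLetters, Option.toList_some, mem_cons, not_mem_nil, or_false] at hap hcp
      rcases hap with rfl | rfl <;> rcases hcp with rfl | rfl
      · exact absurd rfl hac
      · exact not_alternate_bipartiteWord_pair hP hdisj hlen rfl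
      · exact alternate_comm.not.1 (not_alternate_bipartiteWord_pair hP hdisj hlen rfl)
      · exact absurd rfl hac
  · exact not_alternate_bipartiteWord_of_not_mem_pairLetters (by simp)
      (nodup_pairLetters_of_nodup hP) hap hcp (hdisj a ha) (hdisj c hc)

end BipartiteWord

section TwoWord

variable {V : Type*} [DecidableEq V] {G : SimpleGraph V} [DecidableRel G.Adj]
  {LB : List V} {a b c x y : V}

theorem twoWord_perm : twoWord G LB x y ~ LB ++ LB ++ [x, y, x, y] := by
  refine perm_iff_count.2 fun z => ?_
  have h := (classSort_perm (G := G) (LB := LB) (x, some y)).count_eq z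
  simp only [classSort, twoWord, count_append, count_cons, count_reverse, count_nil] at h ⊢
  omega

theorem count_twoWord (hLB : LB.Nodup) (hx : x ∉ LB) (hy : y ∉ LB) (hxy : x ≠ y) {z : V}
    (hz : z ∈ LB ∨ z = x ∨ z = y) : (twoWord G LB x y).count z = 2 := by
  rw [twoWord_perm.count_eq]
  rcases hz with hz | rfl | rfl
  · have hzx : z ≠ x := fun h => hx (h ▸ hz)
    have hzy : z ≠ y := fun h => hy (h ▸ hz)
    simp [count_eq_one_of_mem hLB hz, hzx.symm, hzy.symm]
  · simp [count_eq_zero.2 hx, hxy.symm]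
  · simp [count_eq_zero.2 hy, hxy]

theorem not_alternate_twoWord_of_mem (hx : x ∉ LB) (hy : y ∉ LB) (hb : b ∈ LB) (hc : c ∈ LB) :
    ¬ Alternate (twoWord G LB x y) b c := by
  have hxbc : ¬(x = b ∨ x = c) := by rintro (rfl | rfl) <;> contradiction
  have hybc : ¬(y = b ∨ y = c) := by rintro (rfl | rfl) <;> contradiction
  have hs : restrict b c (classSort G LB (x, some y)) ≠ [] :=
    ne_nil_of_mem (mem_restrict.2 ⟨(classSort_perm _).symm.subset hb, Or.inl rfl⟩)
  rw [alternate_iff_isChain_restrict]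
  convert not_isChain_append_reverse hs using 2
  simp [twoWord, classSort, restrict_reverse, hxbc, hybc]

theorem not_alternate_twoWord (hx : x ∉ LB) (hy : y ∉ LB) :
    ¬ Alternate (twoWord G LB x y) x y := by
  have hc : ∀ i, restrict x y (classList G LB (x, some y) i) = [] := fun i =>
    restrict_eq_nil (fun h => hx (mem_of_mem_filter h)) (fun h => hy (mem_of_mem_filter h))
  rw [alternate_iff_isChain_restrict]
  simp [twoWord, restrict_reverse, hc]

theorem adj_iff_alternate_twoWord (hLB : LB.Nodup) (hx : x ∉ LB) (hy : y ∉ LB) (hxy : x ≠ y)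
    (ha : a = x ∨ a = y) (hb : b ∈ LB) : G.Adj a b ↔ Alternate (twoWord G LB x y) a b := by
  have hcl := restrict_classList (G := G) hLB (a := a) (by rcases ha with rfl | rfl <;> assumption)
    hb (x, some y)
  have hxb : x ≠ b := fun h => hx (h ▸ hb)
  have hyb : y ≠ b := fun h => hy (h ▸ hb)
  rw [alternate_iff_isChain_restrict]
  by_cases hxa : G.Adj x b <;> by_cases hya : G.Adj y b <;> rcases ha with rfl | rfl <;>
    simp [twoWord, restrict_reverse, hcl, adjClass, hxa, hya, hxb, hyb, hxy, hxy.symm,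
      hxb.symm, hyb.symm]

end TwoWord

section Assembly

variable {V : Type*} [Fintype V] [DecidableEq V] {G : SimpleGraph V} {A B : Finset V}

theorem representable_of_isBipartition (hbip : IsBipartition G A B) {w : List V} {k : ℕ}
    (hk : 0 < k) (hcount : ∀ v, w.count v = k)
    (hA : ∀ a ∈ A, ∀ c ∈ A, a ≠ c → ¬ Alternate w a c)
    (hB : ∀ b ∈ B, ∀ c ∈ B, b ≠ c → ¬ Alternate w b c)
    (hAB : ∀ a ∈ A, ∀ b ∈ B, G.Adj a b ↔ Alternate w a b) : Representable G k := by
  obtain ⟨hcover, hdisj, hedge⟩ := hbip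
  have hmem : ∀ v, v ∈ A ∨ v ∈ B := fun v => Finset.mem_union.1 (hcover ▸ Finset.mem_univ v)
  have hnot : ∀ v, v ∈ A → v ∈ B → False := fun _ hA hB => Finset.disjoint_left.1 hdisj hA hB
  refine ⟨w, ⟨fun v => count_pos_iff.1 (hcount v ▸ hk), fun s t hst => ?_⟩, hcount⟩
  rcases hmem s with hs | hs <;> rcases hmem t with ht | ht
  · refine iff_of_false (fun h => ?_) (hA s hs t ht hst)
    rcases hedge s t h with ⟨-, h⟩ | ⟨h, -⟩
    exacts [hnot t ht h, hnot s hs h]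
  · exact hAB s hs t ht
  · rw [G.adj_comm, alternate_comm]
    exact hAB t ht s hs
  · refine iff_of_false (fun h => ?_) (hB s hs t ht hst)
    rcases hedge s t h with ⟨h, -⟩ | ⟨-, h⟩
    exacts [hnot s h hs, hnot t h ht]

theorem representable_of_card_ne_two (hbip : IsBipartition G A B) (hA : A.Nonempty)
    (hA2 : A.card ≠ 2) : Representable G (1 + (A.card + 1) / 2) := by
  classical
  set P := pairUp A.toList
  set LB := B.toList.mergeSort fun u v => classSum G P u ≤ classSum G P v
  have hLBperm : LB ~ B.toList := mergeSort_perm _ _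
  have hLBmem : ∀ z, z ∈ LB ↔ z ∈ B := fun z => hLBperm.mem_iff.trans Finset.mem_toList
  have hPA : lettersOf P = A.toList := lettersOf_pairUp _
  have hPmem : ∀ z, z ∈ lettersOf P ↔ z ∈ A := fun z => by rw [hPA, Finset.mem_toList]
  have hLB : LB.Nodup := hLBperm.nodup_iff.2 B.nodup_toList
  have hP : (lettersOf P).Nodup := hPA ▸ A.nodup_toList
  have hdisj : ∀ z ∈ lettersOf P, z ∉ LB := fun z hz hz' =>
    Finset.disjoint_left.1 hbip.2.1 ((hPmem z).1 hz) ((hLBmem z).1 hz')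
  have hsort : LB.Pairwise fun u v => classSum G P u ≤ classSum G P v :=
    (pairwise_mergeSort (fun _ _ _ => by simp; omega) (fun _ _ => by simp; omega) _).imp
      (by simp)
  have hPlen : P.length = (A.card + 1) / 2 := by rw [length_pairUp, Finset.length_toList]
  have hlen : (lettersOf P).length ≠ 2 := by rwa [hPA, Finset.length_toList]
  have hPne : P ≠ [] := by
    rw [← length_pos_iff, hPlen]
    have := hA.card_pos
    omega
  refine representable_of_isBipartition (w := bipartiteWord G LB P) hbip (by omega) (fun v => ?_)
    (fun a ha c hc hac => ?_) (fun b hb c hc hbc => ?_) (fun a ha b hb => ?_)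
  · have hv := Finset.mem_union.1 (hbip.1 ▸ Finset.mem_univ v)
    rw [count_bipartiteWord hLB hP hdisj (by rw [hLBmem, hPmem]; exact hv.symm), hPlen, add_comm]
  · exact not_alternate_bipartiteWord_of_mem_lettersOf hP hdisj hlen ((hPmem a).2 ha)
      ((hPmem c).2 hc) hac
  · exact not_alternate_bipartiteWord_of_mem_LB hLB hdisj hsort hPne ((hLBmem b).2 hb)
      ((hLBmem c).2 hc) hbc
  · exact adj_iff_alternate_bipartiteWord hLB hP hdisj ((hPmem a).2 ha) ((hLBmem b).2 hb)

theorem representable_two_of_card_eq_two (hbip : IsBipartition G A B) (hA2 : A.card = 2) :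
    Representable G 2 := by
  classical
  obtain ⟨x, y, hxy, rfl⟩ := Finset.card_eq_two.1 hA2
  have hdisj : ∀ z ∈ B, z ≠ x ∧ z ≠ y := fun z hz => by
    constructor <;> rintro rfl <;> exact Finset.disjoint_left.1 hbip.2.1 (by simp) hz
  have hx : x ∉ B.toList := fun h => (hdisj x (Finset.mem_toList.1 h)).1 rfl
  have hy : y ∉ B.toList := fun h => (hdisj y (Finset.mem_toList.1 h)).2 rfl
  refine representable_of_isBipartition (w := twoWord G B.toList x y) hbip two_pos (fun v => ?_)
    (fun a ha c hc hac => ?_) (fun b hb c hc _ => ?_) (fun a ha b hb => ?_)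
  · refine count_twoWord B.nodup_toList hx hy hxy ?_
    have hv : v ∈ {x, y} ∪ B := hbip.1 ▸ Finset.mem_univ v
    simpa [or_comm, or_assoc] using hv
  · simp only [Finset.mem_insert, Finset.mem_singleton] at ha hc
    rcases ha with rfl | rfl <;> rcases hc with rfl | rfl
    · exact absurd rfl hac
    · exact not_alternate_twoWord hx hy
    · exact alternate_comm.not.1 (not_alternate_twoWord hx hy)
    · exact absurd rfl hac
  · exact not_alternate_twoWord_of_mem hx hy (Finset.mem_toList.2 hb) (Finset.mem_toList.2 hc)
  · exact adj_iff_alternate_twoWord B.nodup_toList hx hy hxy (by simpa using ha)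
      (Finset.mem_toList.2 hb)

end Assembly

end BipartiteWordRep

theorem bipartite_representable_one_add_ceil_half_general
    {V : Type*} [Fintype V] [DecidableEq V] (G : SimpleGraph V)
    (A B : Finset V) (m : ℕ)
    (hbip : IsBipartition G A B)
    (hA : A.card = m)
    (hm : 1 ≤ m) :
    Representable G (1 + (m + 1) / 2) ∧ repNumber G ≤ 1 + (m + 1) / 2 := by
  subst hA
  have hrep : Representable G (1 + (A.card + 1) / 2) := by
    by_cases hA2 : A.card = 2
    · rw [hA2]
      exact BipartiteWordRep.representable_two_of_card_eq_two hbip hA2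
    · exact BipartiteWordRep.representable_of_card_ne_two hbip (Finset.card_pos.1 hm) hA2
  exact ⟨hrep, Nat.sInf_le hrep⟩

theorem bipartite_representable_one_add_ceil_half
    {V : Type*} [Fintype V] [DecidableEq V] (G : SimpleGraph V)
    (A B : Finset V) (m n : ℕ)
    (hbip : IsBipartition G A B) (hconn : G.Connected) (hred : Reduced G)
    (hA : A.card = m) (hB : B.card = n)
    (hm : 1 ≤ m) (hmn : m ≤ n) :
    Representable G (1 + (m + 1) / 2) ∧ repNumber G ≤ 1 + (m + 1) / 2 :=
  bipartite_representable_one_add_ceil_half_general G A B m hbip hA hm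
end

section
/- Let G be a finite connected reduced bipartite graph with partite sets A and B of sizes m and n respectively, where 1 ≤ m ≤ n. If m is even and n = m + 1 or n = m + 2, then the representation number of G satisfies R(G) ≤ ⌈(m+n)/4⌉. -/
/-!
Every bipartite graph with `|A| = 2K`, `K ≥ 1`, has a `(K + 1)`-uniform word-representant, and
`K + 1 ≤ (m + n + 3) / 4` once `n ≥ m + 1`. Number `A` as `a 0, …, a (2K-1)` and pair
`p = a (2t)` with `q = a (2t+1)`. Sorting `B` by adjacency to `(p, q)` into `W X Y Z` (neighbours
of neither, of `p` only, of both, of `q` only), the crossing block `W p X q Y p Z q` has the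
property that the two copies of `p` enclose exactly the neighbours of `p`, and the two copies of
`q` those of `q`.

For `K ≥ 2` the word is `(W₀ X₀ Y₀ Z₀)ʳ` followed by `K` rounds: round `s` is the crossing block of
pair `s`, preceded by the pairs `t > s` and followed by the pairs `t < s`, each written `q p`. Every
letter occurs `K + 1` times. For `u` in pair `t` and a neighbour `v` the word restricts to
`v (u v)^t (u v u) (v u)^(K-1-t)`, which alternates. Nothing of `{u, v}` lies between the two copies
of `u` in round `t` when `v` is a non-neighbour or a vertex of another pair; the two vertices of a
pair read `q p p q p q` or `p q p q q p` in two consecutive rounds (this needs `K ≥ 2`); and two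
vertices of `B` read `fʳ f` in the prefix and the first round.

For `K = 1` the 2-uniform word `W p X Y p Z q Zʳ Yʳ q Xʳ Wʳ` works (a chord diagram in which all
chords of `B` are nested).
-/

theorem List.isChain_ne_flatten_replicate {α : Type*} {u v : α} (h : u ≠ v) :
    ∀ k, ((List.replicate k [u, v]).flatten).IsChain (· ≠ ·)
  | 0 => by simp
  | 1 => by simp [h]
  | k + 2 => by
    have := List.isChain_ne_flatten_replicate h (k + 1)
    simp only [List.replicate_succ, List.flatten_cons] at this ⊢
    simpa [h.symm] using this

theorem List.cons_flatMap_range_eq_flatten_replicate {α : Type*} {u v : α} {t K : ℕ} (ht : t < K)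
    {f : ℕ → List α}
    (hf : ∀ s < K, f s = if s < t then [u, v] else if s = t then [u, v, u] else [v, u]) :
    v :: (List.range K).flatMap f = (List.replicate (K + 1) [v, u]).flatten := by
  have before : ∀ n ≤ t,
      v :: (List.range n).flatMap f = (List.replicate n [v, u]).flatten ++ [v] := by
    intro n hn
    induction n with
    | zero => rfl
    | succ n ih =>
      rw [List.range_succ, List.flatMap_append, ← List.cons_append, ih (by omega),
        List.flatMap_singleton, hf n (by omega), if_pos (by omega), List.replicate_succ',
        List.flatten_append]
      simp
  have after : ∀ n, t < n → n ≤ K →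
      v :: (List.range n).flatMap f = (List.replicate (n + 1) [v, u]).flatten := by
    intro n htn hnK
    induction n with
    | zero => omega
    | succ n ih =>
      rw [List.range_succ, List.flatMap_append, ← List.cons_append, List.flatMap_singleton,
        hf n (by omega)]
      rcases Nat.lt_or_ge t n with htn' | htn'
      · rw [ih htn' (by omega), if_neg (by omega), if_neg (by omega),
          List.replicate_succ' (n := n + 1), List.flatten_append]
        simp
      · obtain rfl : t = n := by omega
        rw [before t le_rfl, if_neg (lt_irrefl t), if_pos rfl,
          List.replicate_succ', List.replicate_succ', List.flatten_append, List.flatten_append]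
        simp
  exact after K ht le_rfl

theorem List.infix_flatMap_range {α : Type*} (f : ℕ → List α) {s K : ℕ} (h : s + 1 < K) :
    f s ++ f (s + 1) <:+: (List.range K).flatMap f := by
  obtain ⟨r, rfl⟩ : ∃ r, K = s + 2 + r := ⟨K - (s + 2), by omega⟩
  refine ⟨(List.range s).flatMap f, ((List.range r).map (s + 2 + ·)).flatMap f, ?_⟩
  simp [List.range_add, List.range_succ, List.append_assoc]

theorem List.flatMap_ite_eq {α β : Type*} [DecidableEq α] (l : List α) (t : α) (c : List β) :
    l.flatMap (fun x => if x = t then c else []) = (List.replicate (l.count t) c).flatten := by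
  induction l with
  | nil => simp
  | cons x l ih =>
    by_cases hx : x = t
    · simp [hx, ih, List.replicate_succ]
    · simp [hx, ih, List.count_cons_of_ne hx]

theorem List.lt_of_mem_range_filter {p : ℕ → Bool} {K t : ℕ}
    (h : t ∈ (List.range K).filter p) : t < K :=
  List.mem_range.mp (List.mem_filter.mp h).1

theorem List.sum_map_range_ite {t K : ℕ} (ht : t < K) :
    ((List.range K).map fun s => if t = s then 2 else 1).sum = K + 1 := by
  induction K with
  | zero => omega
  | succ K ih =>
    rw [List.range_succ, List.map_append, List.sum_append]
    rcases Nat.lt_or_ge t K with htK | htK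
    · simp [ih htK, htK.ne]
    · obtain rfl : t = K := by omega
      have : ((List.range t).map fun s => if t = s then 2 else 1) = List.replicate t 1 := by
        rw [List.eq_replicate_iff]
        simp only [List.length_map, List.length_range, List.mem_map, List.mem_range, true_and]
        rintro _ ⟨s, hs, rfl⟩
        simp [hs.ne']
      simp [this]

theorem Finset.count_toList {α : Type*} [DecidableEq α] (s : Finset α) (x : α) :
    s.toList.count x = if x ∈ s then 1 else 0 := by
  simp [s.nodup_toList.count]

theorem Finset.exists_bijOn_Iio {α : Type*} {s : Finset α} (hs : s.Nonempty) :
    ∃ a : ℕ → α, Set.BijOn a (Set.Iio s.card) s := by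
  obtain ⟨x, -⟩ := hs
  refine ⟨fun i => s.toList.getD i x, fun i hi => ?_, fun i hi j hj hij => ?_, fun v hv => ?_⟩
  · have hi : i < s.toList.length := by simpa using hi
    show s.toList.getD i x ∈ s
    rw [List.getD_eq_getElem _ _ hi]
    exact Finset.mem_toList.mp (List.getElem_mem _)
  · have hi : i < s.toList.length := by simpa using hi
    have hj : j < s.toList.length := by simpa using hj
    simp only [List.getD_eq_getElem _ _ hi, List.getD_eq_getElem _ _ hj] at hij
    exact s.nodup_toList.getElem_inj_iff.mp hij
  · obtain ⟨i, hi, rfl⟩ := List.mem_iff_getElem.mp (Finset.mem_toList.mpr hv)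
    exact ⟨i, by simpa using hi, List.getD_eq_getElem _ _ hi⟩

section Restriction

variable {α : Type*} [DecidableEq α]

def restrictPair (w : List α) (u v : α) : List α :=
  w.filter fun x => x = u ∨ x = v

theorem alternate_iff_isChain {w : List α} {u v : α} :
    Alternate w u v ↔ (restrictPair w u v).IsChain (· ≠ ·) := Iff.rfl

@[simp] theorem restrictPair_nil (u v : α) : restrictPair [] u v = [] := rfl

@[simp] theorem restrictPair_append (l₁ l₂ : List α) (u v : α) :
    restrictPair (l₁ ++ l₂) u v = restrictPair l₁ u v ++ restrictPair l₂ u v :=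
  List.filter_append ..

@[simp] theorem restrictPair_reverse (l : List α) (u v : α) :
    restrictPair l.reverse u v = (restrictPair l u v).reverse :=
  List.filter_reverse ..

theorem restrictPair_flatMap {β : Type*} (l : List β) (f : β → List α) (u v : α) :
    restrictPair (l.flatMap f) u v = l.flatMap fun x => restrictPair (f x) u v :=
  List.filter_flatMap

@[simp] theorem restrictPair_cons_left (l : List α) (u v : α) :
    restrictPair (u :: l) u v = u :: restrictPair l u v := by
  simp [restrictPair]

@[simp] theorem restrictPair_cons_right (l : List α) (u v : α) :
    restrictPair (v :: l) u v = v :: restrictPair l u v := by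
  simp [restrictPair]

theorem restrictPair_cons_of_ne {x u v : α} (hu : x ≠ u) (hv : x ≠ v) (l : List α) :
    restrictPair (x :: l) u v = restrictPair l u v := by
  simp [restrictPair, hu, hv]

theorem restrictPair_comm (w : List α) (u v : α) : restrictPair w u v = restrictPair w v u :=
  List.filter_congr fun _ _ => by simp [or_comm]

theorem restrictPair_eq_replicate_right {l : List α} {u : α} (hu : u ∉ l) (v : α) :
    restrictPair l u v = List.replicate (l.count v) v := by
  rw [restrictPair, ← List.filter_eq]
  refine List.filter_congr fun x hx => ?_
  have : x ≠ u := fun h => hu (h ▸ hx)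
  simp [this]

theorem restrictPair_eq_replicate_left {l : List α} (u : α) {v : α} (hv : v ∉ l) :
    restrictPair l u v = List.replicate (l.count u) u := by
  rw [restrictPair_comm, restrictPair_eq_replicate_right hv]

theorem restrictPair_eq_nil {l : List α} {u v : α} (hu : u ∉ l) (hv : v ∉ l) :
    restrictPair l u v = [] := by
  rw [restrictPair_eq_replicate_right hu, List.count_eq_zero_of_not_mem hv, List.replicate_zero]

theorem restrictPair_enclose {l₁ m l₂ : List α} {u v : α} (h₁ : u ∉ l₁) (hm : u ∉ m)
    (h₂ : u ∉ l₂) :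
    restrictPair (l₁ ++ u :: (m ++ u :: l₂)) u v =
      List.replicate (l₁.count v) v ++ u :: (List.replicate (m.count v) v ++
        u :: List.replicate (l₂.count v) v) := by
  simp [restrictPair_eq_replicate_right, h₁, hm, h₂]

theorem alternate_comm {w : List α} {u v : α} : Alternate w u v ↔ Alternate w v u := by
  rw [alternate_iff_isChain, alternate_iff_isChain, restrictPair_comm]

theorem not_alternate_of_infix {c w : List α} {u v z : α} (hc : c <:+: w)
    (hz : [z, z] <:+: restrictPair c u v) : ¬Alternate w u v := fun h => by
  simpa using h.infix (hz.trans (hc.filter _))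

theorem not_alternate_of_append_reverse {w : List α} {u v : α} {f : List α} (hf : f ≠ [])
    (h : f ++ f.reverse <:+: restrictPair w u v) : ¬Alternate w u v := by
  obtain ⟨l, x, rfl⟩ := List.eq_nil_or_concat f |>.resolve_left hf
  have hx : [x, x] <:+: l.concat x ++ (l.concat x).reverse := ⟨l, l.reverse, by simp⟩
  exact not_alternate_of_infix (List.infix_refl w) (hx.trans h)

theorem not_alternate_of_enclose {m w : List α} {u v : α} (h : u :: (m ++ [u]) <:+: w)
    (hu : u ∉ m) (hv : v ∉ m) : ¬Alternate w u v :=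
  not_alternate_of_infix h (z := u) ⟨[], [], by simp [restrictPair_eq_nil hu hv]⟩

theorem alternate_of_enclose {l₁ m l₂ : List α} {u v : α} (huv : u ≠ v) (h₁ : u ∉ l₁)
    (hm : u ∉ m) (h₂ : u ∉ l₂) (hvm : m.count v = 1) (hv : l₁.count v + l₂.count v = 1) :
    Alternate (l₁ ++ u :: (m ++ u :: l₂)) u v := by
  rw [alternate_iff_isChain, restrictPair_enclose h₁ hm h₂, hvm]
  rcases Nat.eq_zero_or_pos (l₁.count v) with h0 | h0
  · rw [h0, show l₂.count v = 1 by omega]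
    simpa using List.isChain_ne_flatten_replicate huv 2
  · rw [show l₁.count v = 1 by omega, show l₂.count v = 0 by omega]
    simpa using List.isChain_ne_flatten_replicate huv.symm 2

end Restriction

theorem IsUniformWord.mem {V : Type*} [DecidableEq V] {w : List V} {k : ℕ}
    (h : IsUniformWord w k) (hk : k ≠ 0) (v : V) : v ∈ w :=
  List.count_pos_iff.mp (by rw [h v]; omega)

namespace IsBipartition

variable {V : Type*} [Fintype V] [DecidableEq V] {G : SimpleGraph V} {A B : Finset V}

theorem mem_right_iff (h : IsBipartition G A B) {v : V} : v ∈ B ↔ v ∉ A := by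
  have hv : v ∈ A ∪ B := h.1 ▸ Finset.mem_univ v
  constructor
  · exact fun hB hA => Finset.disjoint_left.mp h.2.1 hA hB
  · exact fun hA => (Finset.mem_union.mp hv).resolve_left hA

theorem not_adj_of_mem_left (h : IsBipartition G A B) {u v : V} (hu : u ∈ A) (hv : v ∈ A) :
    ¬G.Adj u v := fun huv => by
  rcases h.2.2 u v huv with ⟨-, hv'⟩ | ⟨hu', -⟩
  · exact h.mem_right_iff.mp hv' hv
  · exact h.mem_right_iff.mp hu' hu

theorem not_adj_of_mem_right (h : IsBipartition G A B) {u v : V} (hu : u ∈ B) (hv : v ∈ B) :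
    ¬G.Adj u v := fun huv => by
  rcases h.2.2 u v huv with ⟨hu', -⟩ | ⟨-, hv'⟩
  · exact h.mem_right_iff.mp hu hu'
  · exact h.mem_right_iff.mp hv hv'

theorem represents {w : List V} (h : IsBipartition G A B) (hw : ∀ v, v ∈ w)
    (hAA : ∀ u ∈ A, ∀ u' ∈ A, u ≠ u' → ¬Alternate w u u')
    (hBB : ∀ v ∈ B, ∀ v' ∈ B, v ≠ v' → ¬Alternate w v v')
    (hAB : ∀ u ∈ A, ∀ v ∈ B, G.Adj u v ↔ Alternate w u v) : Represents G w := by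
  refine ⟨hw, fun u v huv => ?_⟩
  by_cases hu : u ∈ A <;> by_cases hv : v ∈ A
  · exact iff_of_false (h.not_adj_of_mem_left hu hv) (hAA u hu v hv huv)
  · exact hAB u hu v (h.mem_right_iff.mpr hv)
  · rw [G.adj_comm, alternate_comm]
    exact hAB v hv u (h.mem_right_iff.mpr hu)
  · have hu := h.mem_right_iff.mpr hu
    have hv := h.mem_right_iff.mpr hv
    exact iff_of_false (h.not_adj_of_mem_right hu hv) (hBB u hu v hv huv)

end IsBipartition

section AdjClass

variable {V : Type*} (G : SimpleGraph V) [DecidableRel G.Adj] (B : Finset V)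

noncomputable def adjClass (p q : V) (i j : Bool) : List V :=
  (B.filter fun v => decide (G.Adj p v) = i ∧ decide (G.Adj q v) = j).toList

noncomputable def adjSweep (p q : V) : List V :=
  adjClass G B p q false false ++ adjClass G B p q true false ++ adjClass G B p q true true ++
    adjClass G B p q false true

variable {G B}

theorem mem_adjClass {p q v : V} {i j : Bool} :
    v ∈ adjClass G B p q i j ↔ v ∈ B ∧ decide (G.Adj p v) = i ∧ decide (G.Adj q v) = j := by
  simp [adjClass]

theorem not_mem_adjClass {v : V} (hv : v ∉ B) (p q : V) (i j : Bool) :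
    v ∉ adjClass G B p q i j := by
  simp [adjClass, hv]

theorem not_mem_adjSweep {v : V} (hv : v ∉ B) (p q : V) : v ∉ adjSweep G B p q := by
  simp [adjSweep, not_mem_adjClass hv]

theorem mem_adjClass_left_iff {v : V} (hv : v ∈ B) (p q : V) :
    v ∈ adjClass G B p q true false ++ adjClass G B p q true true ↔ G.Adj p v := by
  by_cases G.Adj q v <;> simp [mem_adjClass, *]

theorem mem_adjClass_right_iff {v : V} (hv : v ∈ B) (p q : V) :
    v ∈ adjClass G B p q true true ++ adjClass G B p q false true ↔ G.Adj q v := by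
  by_cases G.Adj p v <;> simp [mem_adjClass, *]

theorem count_adjSweep [DecidableEq V] {v : V} (hv : v ∈ B) (p q : V) :
    (adjSweep G B p q).count v = 1 := by
  simp only [adjSweep, List.count_append, adjClass, Finset.count_toList, Finset.mem_filter]
  cases decide (G.Adj p v) <;> cases decide (G.Adj q v) <;> simp [hv]

end AdjClass

section ChordWord

variable {V : Type*} {p q : V} {W X Y Z : List V}

def chordWord (p q : V) (W X Y Z : List V) : List V :=
  W ++ p :: (X ++ Y ++ p :: (Z ++ q :: (Z.reverse ++ Y.reverse ++ q :: (X.reverse ++ W.reverse))))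

theorem chordWord_eq_enclose_right :
    chordWord p q W X Y Z = (W ++ p :: (X ++ Y ++ p :: Z)) ++
      q :: ((Z.reverse ++ Y.reverse) ++ q :: (X.reverse ++ W.reverse)) := by
  simp [chordWord]

theorem chordWord_infix_left : p :: (X ++ Y ++ [p]) <:+: chordWord p q W X Y Z :=
  ⟨W, Z ++ q :: (Z.reverse ++ Y.reverse ++ q :: (X.reverse ++ W.reverse)), by simp [chordWord]⟩

theorem chordWord_infix_right :
    q :: (Z.reverse ++ Y.reverse ++ [q]) <:+: chordWord p q W X Y Z :=
  ⟨W ++ p :: (X ++ Y ++ p :: Z), X.reverse ++ W.reverse, by simp [chordWord]⟩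

variable [DecidableEq V]

theorem count_chordWord (v : V) :
    (chordWord p q W X Y Z).count v =
      2 * (W ++ X ++ Y ++ Z).count v + (if p = v then 2 else 0) + (if q = v then 2 else 0) := by
  simp only [chordWord, List.count_append, List.count_cons, List.count_reverse]
  split_ifs <;> simp_all <;> omega

theorem isUniformWord_chordWord (hpq : p ≠ q) (hp : p ∉ W ++ X ++ Y ++ Z)
    (hq : q ∉ W ++ X ++ Y ++ Z) (hv : ∀ v, p ≠ v → q ≠ v → (W ++ X ++ Y ++ Z).count v = 1) :
    IsUniformWord (chordWord p q W X Y Z) 2 := by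
  intro v
  rw [count_chordWord]
  by_cases hpv : p = v
  · subst hpv
    rw [List.count_eq_zero_of_not_mem hp]
    simp [hpq.symm]
  by_cases hqv : q = v
  · subst hqv
    rw [List.count_eq_zero_of_not_mem hq]
    simp [hpv]
  rw [hv v hpv hqv]
  simp [hpv, hqv]

theorem not_alternate_chordWord (hp : p ∉ X ++ Y) (hq : q ∉ X ++ Y) :
    ¬Alternate (chordWord p q W X Y Z) p q :=
  not_alternate_of_enclose chordWord_infix_left hp hq

theorem alternate_chordWord_left_iff (hpq : p ≠ q) (hp : p ∉ W ++ X ++ Y ++ Z) {v : V}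
    (hpv : p ≠ v) (hqv : q ≠ v) (hv : (W ++ X ++ Y ++ Z).count v = 1) :
    Alternate (chordWord p q W X Y Z) p v ↔ v ∈ X ++ Y := by
  refine ⟨fun h => by_contra fun hXY =>
      not_alternate_of_enclose chordWord_infix_left (by simp_all) hXY h,
    fun hXY => alternate_of_enclose hpv (by simp_all) (by simp_all) (by simp_all) ?_ ?_⟩
  all_goals
    have := List.count_pos_iff.mpr hXY
    simp only [List.count_append, List.count_cons_of_ne hqv, List.count_reverse] at hv this ⊢
    omega

theorem alternate_chordWord_right_iff (hpq : p ≠ q) (hq : q ∉ W ++ X ++ Y ++ Z) {v : V}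
    (hpv : p ≠ v) (hqv : q ≠ v) (hv : (W ++ X ++ Y ++ Z).count v = 1) :
    Alternate (chordWord p q W X Y Z) q v ↔ v ∈ Y ++ Z := by
  have hqp := hpq.symm
  refine ⟨fun h => by_contra fun hYZ =>
      not_alternate_of_enclose chordWord_infix_right (by simp_all) (by simp_all) h, fun hYZ => ?_⟩
  rw [chordWord_eq_enclose_right]
  refine alternate_of_enclose hqv (by simp_all) (by simp_all) (by simp_all) ?_ ?_
  all_goals
    have := List.count_pos_iff.mpr hYZ
    simp only [List.count_append, List.count_cons_of_ne hpv, List.count_reverse] at hv this ⊢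
    omega

theorem not_alternate_chordWord_of_ne {v v' : V} (hv : v ∈ W ++ X ++ Y ++ Z) (hpv : p ≠ v)
    (hqv : q ≠ v) (hpv' : p ≠ v') (hqv' : q ≠ v') :
    ¬Alternate (chordWord p q W X Y Z) v v' := by
  refine not_alternate_of_append_reverse (f := restrictPair (W ++ X ++ Y ++ Z) v v') ?_ ⟨[], [], ?_⟩
  · exact List.ne_nil_of_mem (List.mem_filter.mpr ⟨hv, by simp⟩)
  · simp [chordWord, restrictPair_cons_of_ne, hpv, hqv, hpv', hqv']

end ChordWord

theorem IsBipartition.representable_two {V : Type*} [Fintype V] [DecidableEq V]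
    {G : SimpleGraph V} {A B : Finset V} (h : IsBipartition G A B) (hA : A.card = 2) :
    Representable G 2 := by
  classical
  obtain ⟨p, q, hpq, rfl⟩ := Finset.card_eq_two.mp hA
  have hpB : p ∉ B := h.mem_right_iff.not_left.mpr (by simp)
  have hqB : q ∉ B := h.mem_right_iff.not_left.mpr (by simp)
  set W := adjClass G B p q false false
  set X := adjClass G B p q true false
  set Y := adjClass G B p q true true
  set Z := adjClass G B p q false true
  have hp : p ∉ W ++ X ++ Y ++ Z := not_mem_adjSweep hpB p q
  have hq : q ∉ W ++ X ++ Y ++ Z := not_mem_adjSweep hqB p q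
  have hne : ∀ v ∈ B, p ≠ v ∧ q ≠ v := fun v hv =>
    ⟨by rintro rfl; exact hpB hv, by rintro rfl; exact hqB hv⟩
  have hcount : ∀ v ∈ B, (W ++ X ++ Y ++ Z).count v = 1 := fun v hv => count_adjSweep hv p q
  have hunif : IsUniformWord (chordWord p q W X Y Z) 2 := by
    refine isUniformWord_chordWord hpq hp hq fun v hpv hqv => hcount v ?_
    rw [h.mem_right_iff]
    simp [Ne.symm hpv, Ne.symm hqv]
  refine ⟨_, h.represents (hunif.mem two_ne_zero) ?_ ?_ ?_, hunif⟩
  · simp only [Finset.mem_insert, Finset.mem_singleton]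
    rintro u (rfl | rfl) u' (rfl | rfl) huu' <;> try exact absurd rfl huu'
    · exact not_alternate_chordWord (by simp_all) (by simp_all)
    · exact alternate_comm.not.mp (not_alternate_chordWord (by simp_all) (by simp_all))
  · intro v hv v' hv' _
    exact not_alternate_chordWord_of_ne
      (List.count_pos_iff.mp (by rw [hcount v hv]; exact one_pos))
      (hne v hv).1 (hne v hv).2 (hne v' hv').1 (hne v' hv').2
  · simp only [Finset.mem_insert, Finset.mem_singleton]
    rintro u (rfl | rfl) v hv
    · rw [alternate_chordWord_left_iff hpq hp (hne v hv).1 (hne v hv).2 (hcount v hv),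
        mem_adjClass_left_iff hv]
    · rw [alternate_chordWord_right_iff hpq hq (hne v hv).1 (hne v hv).2 (hcount v hv),
        mem_adjClass_right_iff hv]

section CrossingBlock

variable {V : Type*} {p q : V} {W X Y Z : List V}

def crossingBlock (p q : V) (W X Y Z : List V) : List V :=
  W ++ p :: (X ++ q :: (Y ++ p :: (Z ++ [q])))

theorem crossingBlock_infix_left : p :: (X ++ q :: Y ++ [p]) <:+: crossingBlock p q W X Y Z :=
  ⟨W, Z ++ [q], by simp [crossingBlock]⟩

theorem crossingBlock_infix_right : q :: (Y ++ p :: Z ++ [q]) <:+: crossingBlock p q W X Y Z :=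
  ⟨W ++ p :: X, [], by simp [crossingBlock]⟩

variable [DecidableEq V]

theorem count_crossingBlock (v : V) :
    (crossingBlock p q W X Y Z).count v =
      (W ++ X ++ Y ++ Z).count v + (if p = v then 2 else 0) + (if q = v then 2 else 0) := by
  simp only [crossingBlock, List.count_append, List.count_cons, List.count_nil]
  split_ifs <;> simp_all <;> omega

theorem restrictPair_crossingBlock_left (hpq : p ≠ q) (hp : p ∉ W ++ X ++ Y ++ Z) {v : V}
    (hqv : q ≠ v) (hv : (W ++ X ++ Y ++ Z).count v = 1) (hXY : v ∈ X ++ Y) :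
    restrictPair (crossingBlock p q W X Y Z) p v = [p, v, p] := by
  have hc := List.count_pos_iff.mpr hXY
  rw [show crossingBlock p q W X Y Z = W ++ p :: ((X ++ q :: Y) ++ p :: (Z ++ [q])) by
    simp [crossingBlock], restrictPair_enclose (by simp_all) (by simp_all) (by simp_all)]
  simp only [List.count_append, List.count_cons_of_ne hqv] at hv hc ⊢
  rw [show W.count v = 0 by omega, show X.count v + Y.count v = 1 by omega,
    show Z.count v = 0 by omega]
  simp

theorem restrictPair_crossingBlock_right (hpq : p ≠ q) (hq : q ∉ W ++ X ++ Y ++ Z) {v : V}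
    (hpv : p ≠ v) (hv : (W ++ X ++ Y ++ Z).count v = 1) (hYZ : v ∈ Y ++ Z) :
    restrictPair (crossingBlock p q W X Y Z) q v = [q, v, q] := by
  have hc := List.count_pos_iff.mpr hYZ
  rw [show crossingBlock p q W X Y Z = (W ++ p :: X) ++ q :: ((Y ++ p :: Z) ++ q :: []) by
    simp [crossingBlock], restrictPair_enclose (by simp_all [Ne.symm hpq])
      (by simp_all [Ne.symm hpq]) (by simp)]
  simp only [List.count_append, List.count_cons_of_ne hpv] at hv hc ⊢
  rw [show W.count v + X.count v = 0 by omega, show Y.count v + Z.count v = 1 by omega]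
  rfl

theorem restrictPair_crossingBlock_self (hp : p ∉ W ++ X ++ Y ++ Z)
    (hq : q ∉ W ++ X ++ Y ++ Z) :
    restrictPair (crossingBlock p q W X Y Z) p q = [p, q, p, q] := by
  simp_all [crossingBlock, restrictPair_eq_nil]

theorem restrictPair_crossingBlock_of_ne {v v' : V} (hpv : p ≠ v) (hqv : q ≠ v) (hpv' : p ≠ v')
    (hqv' : q ≠ v') :
    restrictPair (crossingBlock p q W X Y Z) v v' = restrictPair (W ++ X ++ Y ++ Z) v v' := by
  simp [crossingBlock, restrictPair_cons_of_ne, hpv, hqv, hpv', hqv']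

end CrossingBlock

section AdjBlock

variable {V : Type*} (G : SimpleGraph V) [DecidableRel G.Adj] (B : Finset V)

noncomputable def adjBlock (p q : V) : List V :=
  crossingBlock p q (adjClass G B p q false false) (adjClass G B p q true false)
    (adjClass G B p q true true) (adjClass G B p q false true)

variable {G B} [DecidableEq V]

theorem count_adjBlock (p q v : V) :
    (adjBlock G B p q).count v =
      (adjSweep G B p q).count v + (if p = v then 2 else 0) + (if q = v then 2 else 0) :=
  count_crossingBlock v

theorem count_adjBlock_of_mem {p q v : V} (hp : p ∉ B) (hq : q ∉ B) (hv : v ∈ B) :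
    (adjBlock G B p q).count v = 1 := by
  rw [count_adjBlock, count_adjSweep hv, if_neg (ne_of_mem_of_not_mem hv hp).symm,
    if_neg (ne_of_mem_of_not_mem hv hq).symm]

theorem restrictPair_adjBlock_of_adj {p q u v : V} (hpq : p ≠ q) (hp : p ∉ B) (hq : q ∉ B)
    (hv : v ∈ B) (hu : u = p ∨ u = q) (hadj : G.Adj u v) :
    restrictPair (adjBlock G B p q) u v = [u, v, u] := by
  rcases hu with rfl | rfl
  · exact restrictPair_crossingBlock_left hpq (not_mem_adjSweep hp _ _)
      (ne_of_mem_of_not_mem hv hq).symm (count_adjSweep hv _ _)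
      ((mem_adjClass_left_iff hv _ _).mpr hadj)
  · exact restrictPair_crossingBlock_right hpq (not_mem_adjSweep hq _ _)
      (ne_of_mem_of_not_mem hv hp).symm (count_adjSweep hv _ _)
      ((mem_adjClass_right_iff hv _ _).mpr hadj)

theorem not_alternate_of_adjBlock_infix {w : List V} {p q u v : V} (h : adjBlock G B p q <:+: w)
    (hpq : p ≠ q) (hp : p ∉ B) (hq : q ∉ B) (hv : v ∈ B) (hu : u = p ∨ u = q)
    (hadj : ¬G.Adj u v) : ¬Alternate w u v := by
  rcases hu with rfl | rfl
  · refine not_alternate_of_enclose (crossingBlock_infix_left.trans h) ?_ ?_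
    · simp [not_mem_adjClass hp, hpq]
    · have := (mem_adjClass_left_iff hv u q).not.mpr hadj
      simp only [List.mem_append, List.mem_cons, not_or] at this ⊢
      exact ⟨this.1, ne_of_mem_of_not_mem hv hq, this.2⟩
  · refine not_alternate_of_enclose (crossingBlock_infix_right.trans h) ?_ ?_
    · simp [not_mem_adjClass hq, hpq.symm]
    · have := (mem_adjClass_right_iff hv p u).not.mpr hadj
      simp only [List.mem_append, List.mem_cons, not_or] at this ⊢
      exact ⟨this.1, ne_of_mem_of_not_mem hv hp, this.2⟩

end AdjBlock

section RoundsWord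

variable {V : Type*}

def pairWord (a : ℕ → V) (I : List ℕ) : List V :=
  I.flatMap fun t => [a (2 * t + 1), a (2 * t)]

variable (G : SimpleGraph V) [DecidableRel G.Adj] (B : Finset V) (a : ℕ → V) (K : ℕ)

noncomputable def sweepRound (s : ℕ) : List V :=
  pairWord a ((List.range K).filter (s < ·)) ++ adjBlock G B (a (2 * s)) (a (2 * s + 1)) ++
    pairWord a ((List.range K).filter (· < s))

noncomputable def roundsWord : List V :=
  (adjSweep G B (a 0) (a 1)).reverse ++ (List.range K).flatMap (sweepRound G B a K)

variable {G B a K}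

theorem apply_eq_two_mul_div_two_or (a : ℕ → V) (i : ℕ) :
    a i = a (2 * (i / 2)) ∨ a i = a (2 * (i / 2) + 1) := by
  rcases Nat.mod_two_eq_zero_or_one i with h | h
  · exact Or.inl (congrArg a (by omega))
  · exact Or.inr (congrArg a (by omega))

theorem apply_two_mul_ne_succ (ha : Set.InjOn a (Set.Iio (2 * K))) {t : ℕ} (ht : t < K) :
    a (2 * t) ≠ a (2 * t + 1) := by
  rw [Ne, ha.eq_iff (by simp; omega) (by simp; omega)]
  omega

theorem not_mem_pairWord (haB : ∀ i < 2 * K, a i ∉ B) {I : List ℕ} (hI : ∀ t ∈ I, t < K)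
    {v : V} (hv : v ∈ B) : v ∉ pairWord a I := by
  simp only [pairWord, List.mem_flatMap, List.mem_cons, List.not_mem_nil, or_false, not_exists,
    not_and]
  rintro t ht (rfl | rfl)
  · exact haB _ (by have := hI t ht; omega) hv
  · exact haB _ (by have := hI t ht; omega) hv

theorem sweepRound_infix_roundsWord {s : ℕ} (hs : s < K) :
    sweepRound G B a K s <:+: roundsWord G B a K :=
  (List.infix_of_mem_flatten (List.mem_map_of_mem (List.mem_range.mpr hs))).trans
    (List.suffix_append _ _).isInfix

theorem adjBlock_infix_roundsWord {s : ℕ} (hs : s < K) :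
    adjBlock G B (a (2 * s)) (a (2 * s + 1)) <:+: roundsWord G B a K :=
  (List.infix_append _ _ _).trans (sweepRound_infix_roundsWord hs)

variable [DecidableEq V]

theorem count_pairWord (ha : Set.InjOn a (Set.Iio (2 * K))) {I : List ℕ} (hI : ∀ t ∈ I, t < K)
    {i : ℕ} (hi : i < 2 * K) : (pairWord a I).count (a i) = I.count (i / 2) := by
  induction I with
  | nil => rfl
  | cons t I ih =>
    have ht := hI t (by simp)
    have h1 : a (2 * t + 1) = a i ↔ 2 * t + 1 = i := ha.eq_iff (by simp; omega) hi
    have h0 : a (2 * t) = a i ↔ 2 * t = i := ha.eq_iff (by simp; omega) hi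
    simp only [pairWord, List.flatMap_cons, List.count_append] at ih ⊢
    rw [ih fun s hs => hI s (by simp [hs])]
    simp only [List.count_cons, List.count_nil, beq_iff_eq, h1, h0]
    split_ifs <;> omega

theorem restrictPair_pairWord_pair (ha : Set.InjOn a (Set.Iio (2 * K))) {I : List ℕ}
    (hI : ∀ t ∈ I, t < K) {t : ℕ} (ht : t < K) :
    restrictPair (pairWord a I) (a (2 * t)) (a (2 * t + 1)) =
      (List.replicate (I.count t) [a (2 * t + 1), a (2 * t)]).flatten := by
  rw [pairWord, restrictPair_flatMap, ← List.flatMap_ite_eq]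
  refine List.flatMap_congr fun s hs => ?_
  have hs := hI s hs
  split_ifs with hst
  · subst hst
    simp [restrictPair, (apply_two_mul_ne_succ ha hs).symm]
  · have hinj : ∀ i j, i < 2 * K → j < 2 * K → (a i = a j ↔ i = j) :=
      fun i j hi hj => ha.eq_iff hi hj
    apply restrictPair_eq_nil <;>
      simp [hinj _ _ (show 2 * t < 2 * K by omega) (show 2 * s < 2 * K by omega),
        hinj _ _ (show 2 * t < 2 * K by omega) (show 2 * s + 1 < 2 * K by omega),
        hinj _ _ (show 2 * t + 1 < 2 * K by omega) (show 2 * s < 2 * K by omega),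
        hinj _ _ (show 2 * t + 1 < 2 * K by omega) (show 2 * s + 1 < 2 * K by omega)] <;> omega

theorem count_adjBlock_apply (ha : Set.InjOn a (Set.Iio (2 * K))) (haB : ∀ i < 2 * K, a i ∉ B)
    {i s : ℕ} (hi : i < 2 * K) (hs : s < K) :
    (adjBlock G B (a (2 * s)) (a (2 * s + 1))).count (a i) = if i / 2 = s then 2 else 0 := by
  rw [count_adjBlock, List.count_eq_zero_of_not_mem (not_mem_adjSweep (haB i hi) _ _)]
  simp only [ha.eq_iff (show 2 * s ∈ Set.Iio (2 * K) by simp; omega) hi,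
    ha.eq_iff (show 2 * s + 1 ∈ Set.Iio (2 * K) by simp; omega) hi]
  split_ifs <;> omega

theorem count_sweepRound_apply (ha : Set.InjOn a (Set.Iio (2 * K)))
    (haB : ∀ i < 2 * K, a i ∉ B) {i s : ℕ} (hi : i < 2 * K) (hs : s < K) :
    (sweepRound G B a K s).count (a i) = if i / 2 = s then 2 else 1 := by
  rw [sweepRound, List.count_append, List.count_append,
    count_pairWord ha (fun _ => List.lt_of_mem_range_filter) hi,
    count_pairWord ha (fun _ => List.lt_of_mem_range_filter) hi, count_adjBlock_apply ha haB hi hs,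
    (List.nodup_range.filter _).count, (List.nodup_range.filter _).count]
  simp only [List.mem_filter, List.mem_range, decide_eq_true_eq]
  split_ifs <;> omega

theorem count_sweepRound_of_mem (haB : ∀ i < 2 * K, a i ∉ B) {v : V} (hv : v ∈ B) {s : ℕ}
    (hs : s < K) : (sweepRound G B a K s).count v = 1 := by
  rw [sweepRound, List.count_append, List.count_append,
    List.count_eq_zero_of_not_mem (not_mem_pairWord haB (fun _ => List.lt_of_mem_range_filter) hv),
    List.count_eq_zero_of_not_mem (not_mem_pairWord haB (fun _ => List.lt_of_mem_range_filter) hv),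
    count_adjBlock_of_mem (haB _ (by omega)) (haB _ (by omega)) hv]

theorem count_roundsWord_apply (ha : Set.InjOn a (Set.Iio (2 * K)))
    (haB : ∀ i < 2 * K, a i ∉ B) {i : ℕ} (hi : i < 2 * K) :
    (roundsWord G B a K).count (a i) = K + 1 := by
  rw [roundsWord, List.count_append, List.count_reverse,
    List.count_eq_zero_of_not_mem (not_mem_adjSweep (haB i hi) _ _), List.count_flatMap, zero_add,
    ← List.sum_map_range_ite (t := i / 2) (by omega)]
  congr 1
  exact List.map_congr_left fun s hs =>
    count_sweepRound_apply ha haB hi (List.mem_range.mp hs)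

theorem count_roundsWord_of_mem (haB : ∀ i < 2 * K, a i ∉ B) {v : V} (hv : v ∈ B) :
    (roundsWord G B a K).count v = K + 1 := by
  have hround : (List.range K).map (List.count v ∘ sweepRound G B a K) =
      (List.range K).map fun _ => 1 :=
    List.map_congr_left fun s hs => count_sweepRound_of_mem haB hv (List.mem_range.mp hs)
  rw [roundsWord, List.count_append, List.count_reverse, count_adjSweep hv, List.count_flatMap,
    hround]
  simp [add_comm]

theorem restrictPair_sweepRound_of_ne (ha : Set.InjOn a (Set.Iio (2 * K)))
    (haB : ∀ i < 2 * K, a i ∉ B) {i s : ℕ} (hi : i < 2 * K) (hs : s < K) (hne : i / 2 ≠ s)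
    {v : V} (hv : v ∈ B) :
    restrictPair (sweepRound G B a K s) (a i) v = if s < i / 2 then [a i, v] else [v, a i] := by
  have hblk : a i ∉ adjBlock G B (a (2 * s)) (a (2 * s + 1)) := by
    rw [← List.count_eq_zero, count_adjBlock_apply ha haB hi hs, if_neg hne]
  rw [sweepRound, restrictPair_append, restrictPair_append,
    restrictPair_eq_replicate_left _
      (not_mem_pairWord haB (fun _ => List.lt_of_mem_range_filter) hv),
    restrictPair_eq_replicate_left _
      (not_mem_pairWord haB (fun _ => List.lt_of_mem_range_filter) hv),
    restrictPair_eq_replicate_right hblk, count_adjBlock_of_mem (haB _ (by omega))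
      (haB _ (by omega)) hv, count_pairWord ha (fun _ => List.lt_of_mem_range_filter) hi,
    count_pairWord ha (fun _ => List.lt_of_mem_range_filter) hi,
    (List.nodup_range.filter _).count, (List.nodup_range.filter _).count]
  simp only [List.mem_filter, List.mem_range, decide_eq_true_eq]
  split_ifs <;> first | omega | rfl

theorem restrictPair_sweepRound_self (ha : Set.InjOn a (Set.Iio (2 * K)))
    (haB : ∀ i < 2 * K, a i ∉ B) {i : ℕ} (hi : i < 2 * K) {v : V} (hv : v ∈ B)
    (hadj : G.Adj (a i) v) :
    restrictPair (sweepRound G B a K (i / 2)) (a i) v = [a i, v, a i] := by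
  have hout : ∀ (P : ℕ → Bool), P (i / 2) = false →
      restrictPair (pairWord a ((List.range K).filter P)) (a i) v = [] := by
    intro P hP
    refine restrictPair_eq_nil ?_
      (not_mem_pairWord haB (fun _ => List.lt_of_mem_range_filter) hv)
    rw [← List.count_eq_zero, count_pairWord ha (fun _ => List.lt_of_mem_range_filter) hi,
      List.count_eq_zero]
    simp [hP]
  rw [sweepRound, restrictPair_append, restrictPair_append, hout _ (by simp),
    hout _ (by simp), restrictPair_adjBlock_of_adj (apply_two_mul_ne_succ ha (by omega))
      (haB _ (by omega)) (haB _ (by omega)) hv (apply_eq_two_mul_div_two_or a i) hadj]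
  rfl

theorem restrictPair_sweepRound_pair (ha : Set.InjOn a (Set.Iio (2 * K)))
    (haB : ∀ i < 2 * K, a i ∉ B) {s t : ℕ} (hs : s < K) (ht : t < K) :
    restrictPair (sweepRound G B a K s) (a (2 * t)) (a (2 * t + 1)) =
      if s = t then [a (2 * t), a (2 * t + 1), a (2 * t), a (2 * t + 1)]
      else [a (2 * t + 1), a (2 * t)] := by
  rw [sweepRound, restrictPair_append, restrictPair_append,
    restrictPair_pairWord_pair ha (fun _ => List.lt_of_mem_range_filter) ht,
    restrictPair_pairWord_pair ha (fun _ => List.lt_of_mem_range_filter) ht,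
    (List.nodup_range.filter _).count, (List.nodup_range.filter _).count]
  simp only [List.mem_filter, List.mem_range, decide_eq_true_eq]
  by_cases hst : s = t
  · subst hst
    rw [adjBlock, restrictPair_crossingBlock_self (not_mem_adjSweep (haB _ (by omega)) _ _)
      (not_mem_adjSweep (haB _ (by omega)) _ _)]
    simp
  · have hout : ∀ j, j / 2 = t → j < 2 * K →
        a j ∉ adjBlock G B (a (2 * s)) (a (2 * s + 1)) := by
      intro j hj hjK
      rw [← List.count_eq_zero, count_adjBlock_apply ha haB hjK hs, if_neg (by omega)]
    rw [restrictPair_eq_nil (hout _ (by omega) (by omega)) (hout _ (by omega) (by omega))]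
    rcases Nat.lt_or_gt_of_ne hst with h | h <;> simp [h, h.not_gt, hst, ht]

theorem restrictPair_sweepRound_of_mem (haB : ∀ i < 2 * K, a i ∉ B) {s : ℕ} (hs : s < K)
    {v v' : V} (hv : v ∈ B) (hv' : v' ∈ B) :
    restrictPair (sweepRound G B a K s) v v' =
      restrictPair (adjSweep G B (a (2 * s)) (a (2 * s + 1))) v v' := by
  have hp := haB (2 * s) (by omega)
  have hq := haB (2 * s + 1) (by omega)
  have hI : ∀ P : ℕ → Bool, ∀ x, x ∈ B → x ∉ pairWord a ((List.range K).filter P) :=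
    fun _ _ hx => not_mem_pairWord haB (fun _ => List.lt_of_mem_range_filter) hx
  rw [sweepRound, restrictPair_append, restrictPair_append,
    restrictPair_eq_nil (hI _ v hv) (hI _ v' hv'), restrictPair_eq_nil (hI _ v hv) (hI _ v' hv'),
    adjBlock, restrictPair_crossingBlock_of_ne (ne_of_mem_of_not_mem hv hp).symm
      (ne_of_mem_of_not_mem hv hq).symm (ne_of_mem_of_not_mem hv' hp).symm
      (ne_of_mem_of_not_mem hv' hq).symm]
  simp [adjSweep]

theorem restrictPair_roundsWord (u v : V) :
    restrictPair (roundsWord G B a K) u v =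
      (restrictPair (adjSweep G B (a 0) (a 1)) u v).reverse ++
        (List.range K).flatMap fun s => restrictPair (sweepRound G B a K s) u v := by
  rw [roundsWord, restrictPair_append, restrictPair_reverse, restrictPair_flatMap]

theorem alternate_roundsWord_of_adj (ha : Set.InjOn a (Set.Iio (2 * K)))
    (haB : ∀ i < 2 * K, a i ∉ B) {i : ℕ} (hi : i < 2 * K) {v : V} (hv : v ∈ B)
    (hadj : G.Adj (a i) v) : Alternate (roundsWord G B a K) (a i) v := by
  rw [alternate_iff_isChain, restrictPair_roundsWord,
    restrictPair_eq_replicate_right (not_mem_adjSweep (haB i hi) _ _), count_adjSweep hv,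
    List.replicate_one, List.reverse_singleton, List.singleton_append,
    List.cons_flatMap_range_eq_flatten_replicate (t := i / 2) (u := a i) (by omega)]
  · exact List.isChain_ne_flatten_replicate (ne_of_mem_of_not_mem hv (haB i hi)) _
  · intro s hs
    by_cases hst : s = i / 2
    · rw [hst, restrictPair_sweepRound_self ha haB hi hv hadj]
      simp
    · rw [restrictPair_sweepRound_of_ne ha haB hi hs (Ne.symm hst) hv, if_neg hst]

theorem not_alternate_roundsWord_of_not_adj (ha : Set.InjOn a (Set.Iio (2 * K)))
    (haB : ∀ i < 2 * K, a i ∉ B) {i : ℕ} (hi : i < 2 * K) {v : V} (hv : v ∈ B)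
    (hadj : ¬G.Adj (a i) v) : ¬Alternate (roundsWord G B a K) (a i) v :=
  not_alternate_of_adjBlock_infix (adjBlock_infix_roundsWord (s := i / 2) (by omega))
    (apply_two_mul_ne_succ ha (by omega)) (haB _ (by omega)) (haB _ (by omega)) hv
    (apply_eq_two_mul_div_two_or a i) hadj

theorem not_alternate_roundsWord_of_ne_pair (ha : Set.InjOn a (Set.Iio (2 * K)))
    (haB : ∀ i < 2 * K, a i ∉ B) {i j : ℕ} (hi : i < 2 * K) (hj : j < 2 * K)
    (hij : i / 2 ≠ j / 2) : ¬Alternate (roundsWord G B a K) (a i) (a j) := by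
  refine not_alternate_of_infix (adjBlock_infix_roundsWord (s := i / 2) (by omega)) (z := a i)
    ⟨[], [], ?_⟩
  have hj' : a j ∉ adjBlock G B (a (2 * (i / 2))) (a (2 * (i / 2) + 1)) := by
    rw [← List.count_eq_zero, count_adjBlock_apply ha haB hj (by omega), if_neg (Ne.symm hij)]
  rw [restrictPair_eq_replicate_left _ hj', count_adjBlock_apply ha haB hi (by omega), if_pos rfl]
  rfl

theorem not_alternate_roundsWord_pair (ha : Set.InjOn a (Set.Iio (2 * K)))
    (haB : ∀ i < 2 * K, a i ∉ B) (hK : 2 ≤ K) {t : ℕ} (ht : t < K) :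
    ¬Alternate (roundsWord G B a K) (a (2 * t)) (a (2 * t + 1)) := by
  have hround := fun s (hs : s < K) => restrictPair_sweepRound_pair (G := G) ha haB hs ht
  have hinfix := fun s (hs : s + 1 < K) => (List.infix_flatMap_range (sweepRound G B a K) hs).trans
    (List.suffix_append (adjSweep G B (a 0) (a 1)).reverse _).isInfix
  rcases Nat.eq_zero_or_pos t with rfl | htpos
  · refine not_alternate_of_infix (hinfix 0 (by omega)) (z := a 1) ⟨[a 0, a 1, a 0], [a 0], ?_⟩
    rw [restrictPair_append, hround 0 (by omega), hround 1 (by omega)]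
    rfl
  · refine not_alternate_of_infix (hinfix (t - 1) (by omega)) (z := a (2 * t))
      ⟨[a (2 * t + 1)], [a (2 * t + 1), a (2 * t), a (2 * t + 1)], ?_⟩
    rw [restrictPair_append, hround _ (by omega), Nat.sub_add_cancel htpos, hround t ht,
      if_neg (by omega), if_pos rfl]
    rfl

theorem not_alternate_roundsWord_of_mem (haB : ∀ i < 2 * K, a i ∉ B) (hK : 0 < K) {v v' : V}
    (hv : v ∈ B) (hv' : v' ∈ B) : ¬Alternate (roundsWord G B a K) v v' := by
  set f := restrictPair (adjSweep G B (a 0) (a 1)) v v'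
  refine not_alternate_of_append_reverse (f := f.reverse) ?_ ?_
  · have hvf : v ∈ f := List.mem_filter.mpr
      ⟨List.count_pos_iff.mp (by rw [count_adjSweep hv]; exact one_pos), by simp⟩
    exact List.reverse_ne_nil_iff.mpr (List.ne_nil_of_mem hvf)
  · obtain ⟨k, rfl⟩ : ∃ k, K = k + 1 := ⟨K - 1, by omega⟩
    rw [restrictPair_roundsWord, List.range_succ_eq_map, List.flatMap_cons,
      restrictPair_sweepRound_of_mem haB (by omega) hv hv', List.reverse_reverse,
      ← List.append_assoc]
    exact (List.prefix_append _ _).isInfix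

end RoundsWord

theorem IsBipartition.represents_roundsWord {V : Type*} [Fintype V] [DecidableEq V]
    {G : SimpleGraph V} [DecidableRel G.Adj] {A B : Finset V} {a : ℕ → V} {K : ℕ}
    (h : IsBipartition G A B) (ha : Set.BijOn a (Set.Iio (2 * K)) A) (hK : 2 ≤ K) :
    Represents G (roundsWord G B a K) ∧ IsUniformWord (roundsWord G B a K) (K + 1) := by
  have haB : ∀ i < 2 * K, a i ∉ B := fun i hi hB => h.mem_right_iff.mp hB (ha.mapsTo hi)
  have hA : ∀ u ∈ A, ∃ i < 2 * K, a i = u := fun u hu => ha.surjOn hu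
  have hunif : IsUniformWord (roundsWord G B a K) (K + 1) := by
    intro v
    by_cases hv : v ∈ B
    · exact count_roundsWord_of_mem haB hv
    · obtain ⟨i, hi, rfl⟩ := hA v (by simpa [h.mem_right_iff] using hv)
      exact count_roundsWord_apply ha.injOn haB hi
  refine ⟨h.represents (hunif.mem K.succ_ne_zero) ?_ ?_ ?_, hunif⟩
  · rintro _ hu _ hu' huu'
    obtain ⟨i, hi, rfl⟩ := hA _ hu
    obtain ⟨j, hj, rfl⟩ := hA _ hu'
    by_cases hij : i / 2 = j / 2
    · rcases Nat.lt_or_gt_of_ne fun h => huu' (congrArg a h) with hlt | hlt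
      · obtain ⟨t, rfl, rfl⟩ : ∃ t, i = 2 * t ∧ j = 2 * t + 1 := ⟨i / 2, by omega, by omega⟩
        exact not_alternate_roundsWord_pair ha.injOn haB hK (by omega)
      · obtain ⟨t, rfl, rfl⟩ : ∃ t, j = 2 * t ∧ i = 2 * t + 1 := ⟨j / 2, by omega, by omega⟩
        exact alternate_comm.not.mp (not_alternate_roundsWord_pair ha.injOn haB hK (by omega))
    · exact not_alternate_roundsWord_of_ne_pair ha.injOn haB hi hj hij
  · exact fun v hv v' hv' _ => not_alternate_roundsWord_of_mem haB (by omega) hv hv'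
  · intro u hu v hv
    obtain ⟨i, hi, rfl⟩ := hA u hu
    exact ⟨alternate_roundsWord_of_adj ha.injOn haB hi hv,
      not_imp_not.mp (not_alternate_roundsWord_of_not_adj ha.injOn haB hi hv)⟩

theorem IsBipartition.representable_succ {V : Type*} [Fintype V] [DecidableEq V]
    {G : SimpleGraph V} {A B : Finset V} (h : IsBipartition G A B) {K : ℕ} (hK : 1 ≤ K)
    (hA : A.card = 2 * K) : Representable G (K + 1) := by
  classical
  rcases Nat.lt_or_ge K 2 with hK2 | hK2
  · obtain rfl : K = 1 := by omega
    exact h.representable_two hA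
  · obtain ⟨a, ha⟩ := Finset.exists_bijOn_Iio (s := A) (Finset.card_pos.mp (by omega))
    rw [hA] at ha
    exact ⟨_, h.represents_roundsWord ha hK2⟩

theorem bipartite_repNumber_le_of_m_even_n_close_general
    {V : Type*} [Fintype V] [DecidableEq V] (G : SimpleGraph V)
    (A B : Finset V) (m n : ℕ)
    (hbip : IsBipartition G A B)
    (hA : A.card = m)
    (hm : 1 ≤ m) (hmeven : Even m) (hn : n = m + 1 ∨ n = m + 2) :
    repNumber G ≤ (m + n + 3) / 4 := by
  obtain ⟨K, rfl⟩ := hmeven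
  have hrep : Representable G (K + 1) := hbip.representable_succ (by omega) (by omega)
  calc repNumber G ≤ K + 1 := Nat.sInf_le hrep
    _ ≤ (K + K + n + 3) / 4 := by omega

theorem bipartite_repNumber_le_of_m_even_n_close
    {V : Type*} [Fintype V] [DecidableEq V] (G : SimpleGraph V)
    (A B : Finset V) (m n : ℕ)
    (hbip : IsBipartition G A B) (hconn : G.Connected) (hred : Reduced G)
    (hA : A.card = m) (hB : B.card = n)
    (hm : 1 ≤ m) (hmn : m ≤ n) (hmeven : Even m) (hn : n = m + 1 ∨ n = m + 2) :
    repNumber G ≤ (m + n + 3) / 4 :=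
  bipartite_repNumber_le_of_m_even_n_close_general G A B m n hbip hA hm hmeven hn
end
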